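/- arXiv:1010.1399 — 2 statements merged into one kernel-verified Lean document; each statement's English description precedes it below -/
import Mathlib

section
/- lim_{n→∞} (n^2/ln n) * (g(n)/g(n+1) - 1) = 1, where g(n) = n^(1/n). -/
/-!
Put `d x = log x / x - log (x + 1) / (x + 1)`, so that
`x ^ (1 / x) / (x + 1) ^ (1 / (x + 1)) = exp (d x)`.
Since `d x → 0` and `exp t - 1 ~ t` at `0`, the expression is asymptotically equivalent to
`x ^ 2 / log x * d x = (1 - x * log (1 + 1 / x) / log x) / (1 + 1 / x)`, which tends to `1`
because `x * log (1 + 1 / x) → 1` while `log x → ∞`.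
-/

open Filter Real Asymptotics Topology

theorem Real.isEquivalent_exp_sub_one : (fun x : ℝ => exp x - 1) ~[𝓝 0] id := by
  simpa using! (hasDerivAt_exp 0).isLittleO

theorem Real.rpow_one_div_self_div_rpow_one_div_succ {x : ℝ} (hx : 0 < x) :
    x ^ (1 / x) / (x + 1) ^ (1 / (x + 1)) = exp (log x / x - log (x + 1) / (x + 1)) := by
  rw [rpow_def_of_pos hx, rpow_def_of_pos (by positivity), ← exp_sub]
  ring_nf

theorem Real.tendsto_log_div_self_sub_log_succ_div_succ :
    Tendsto (fun x : ℝ => log x / x - log (x + 1) / (x + 1)) atTop (𝓝 0) := by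
  have h : Tendsto (fun x : ℝ => log x / x) atTop (𝓝 0) :=
    isLittleO_log_id_atTop.tendsto_div_nhds_zero
  simpa using h.sub (h.comp (tendsto_atTop_add_const_right atTop 1 tendsto_id))

theorem Real.tendsto_sq_div_log_mul_log_div_self_sub_log_succ_div_succ :
    Tendsto (fun x : ℝ => x ^ 2 / log x * (log x / x - log (x + 1) / (x + 1)))
      atTop (𝓝 1) := by
  have hmul : Tendsto (fun x : ℝ => x * log (1 + 1 / x)) atTop (𝓝 1) :=
    tendsto_mul_log_one_add_div_atTop 1
  have hnum : Tendsto (fun x : ℝ => 1 - x * log (1 + 1 / x) * (log x)⁻¹) atTop (𝓝 1) := by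
    simpa using tendsto_const_nhds.sub (hmul.mul tendsto_log_atTop.inv_tendsto_atTop)
  have hden : Tendsto (fun x : ℝ => 1 + x⁻¹) atTop (𝓝 1) := by
    simpa using tendsto_const_nhds.add (tendsto_inv_atTop_zero (𝕜 := ℝ))
  refine (div_one (1 : ℝ) ▸ hnum.div hden one_ne_zero).congr' ?_
  filter_upwards [eventually_gt_atTop 1] with x hx
  have hx0 : 0 < x := by linarith
  have hlog : log x ≠ 0 := (log_pos hx).ne'
  rw [Pi.div_apply, one_add_div hx0.ne', log_div (by positivity) hx0.ne', add_comm x 1]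
  field_simp
  ring

theorem Real.tendsto_sq_div_log_mul_rpow_one_div_self_div_rpow_one_div_succ_sub_one :
    Tendsto (fun x : ℝ => x ^ 2 / log x * (x ^ (1 / x) / (x + 1) ^ (1 / (x + 1)) - 1))
      atTop (𝓝 1) := by
  set d := fun x : ℝ => log x / x - log (x + 1) / (x + 1)
  have hequiv :
      (fun x => x ^ 2 / log x * d x) ~[atTop] fun x => x ^ 2 / log x * (exp (d x) - 1) :=
    IsEquivalent.refl.mul (isEquivalent_exp_sub_one.comp_tendsto
      tendsto_log_div_self_sub_log_succ_div_succ).symm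
  refine (hequiv.tendsto_nhds tendsto_sq_div_log_mul_log_div_self_sub_log_succ_div_succ).congr' ?_
  filter_upwards [eventually_gt_atTop 0] with x hx
  rw [rpow_one_div_self_div_rpow_one_div_succ hx]

theorem stmt_13 :
    Tendsto
      (fun n : ℕ =>
        ((n : ℝ) ^ 2 / Real.log n) *
          ((n : ℝ) ^ ((1 : ℝ) / n) / ((n : ℝ) + 1) ^ ((1 : ℝ) / (n + 1)) - 1))
      atTop (nhds 1) :=
  tendsto_sq_div_log_mul_rpow_one_div_self_div_rpow_one_div_succ_sub_one.comp
    tendsto_natCast_atTop_atTop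
end

section
/- For every ε > 0 there exists N such that for all n > N, Σ_{r ≤ n} p_r^(1/n) lies strictly between (1-ε) n p_n^(1/n) · n/(n+1) and (1+ε) n p_n^(1/n) · n/(n+1); equivalently, (1/(n · p_n^(1/n))) Σ_{r ≤ n} p_r^(1/n) → 1 as n → ∞. -/
/-
Since `1 ≤ p r ≤ p n` for `r ≤ n`, the sum lies between `n` and `n * p n ^ (1/n)`, so (as
`n / (n + 1) → 1`) it suffices that `p n ^ (1/n) → 1`, i.e. `log (p n) = o(n)`.
As `π (p n) = n`, this is `log x = o(π x)`, which follows from Chebyshev's lower bound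
`π x * log x ≥ x * log 2 - log (x + 1)`.
-/

open Filter Real

/-- `p n` is the n-th prime, 1-indexed: `p 1 = 2`. -/
noncomputable def p (n : ℕ) : ℕ := Nat.nth Nat.Prime (n - 1)

open Topology
open scoped Nat.Prime

lemma p_prime (n : ℕ) : (p n).Prime := Nat.prime_nth_prime _

lemma natCast_p_pos (n : ℕ) : (0 : ℝ) < p n := by exact_mod_cast (p_prime n).pos

lemma p_monotone : Monotone p :=
  (Nat.nth_monotone Nat.infinite_setOfPred_prime).comp fun _ _ h => Nat.sub_le_sub_right h 1

lemma tendsto_p_atTop : Tendsto p atTop atTop :=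
  (Nat.nth_strictMono Nat.infinite_setOfPred_prime).tendsto_atTop.comp (tendsto_sub_atTop_nat 1)

lemma primeCounting_p {n : ℕ} (hn : 1 ≤ n) : π (p n) = n := by
  rw [Nat.primeCounting, Nat.primeCounting', p,
    Nat.count_nth_succ fun hf => absurd hf Nat.infinite_setOfPred_prime]
  omega

lemma eventually_le_four_mul_primeCounting_mul_log :
    ∀ᶠ m : ℕ in atTop, (m : ℝ) ≤ 4 * π m * log m := by
  have hlog : ∀ᶠ m : ℕ in atTop, log ((m : ℝ) + 1) ≤ ((m : ℝ) + 1) / 8 := by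
    have hshift : Tendsto (fun m : ℕ => (m : ℝ) + 1) atTop atTop :=
      tendsto_atTop_add_const_right _ 1 tendsto_natCast_atTop_atTop
    filter_upwards [hshift.eventually (isLittleO_log_id_atTop.bound (c := 1 / 8) (by norm_num))]
      with m hm
    rw [id, Real.norm_of_nonneg (by positivity : (0 : ℝ) ≤ m + 1), Real.norm_eq_abs] at hm
    linarith [le_abs_self (log ((m : ℝ) + 1))]
  filter_upwards [hlog, eventually_ge_atTop 2] with m hm hm2
  have hlogm : 0 < log (m : ℝ) := log_pos (by exact_mod_cast hm2)
  have hChebyshev := (div_le_iff₀ hlogm).mp (Chebyshev.pi_ge m)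
  have hm1 : (1 : ℝ) ≤ m := by exact_mod_cast (by omega : 1 ≤ m)
  -- `π m * log m ≥ m * log 2 - log (m + 1) ≥ m / 2 - (m + 1) / 8 ≥ m / 4`
  nlinarith [log_two_gt_d9]

lemma tendsto_log_div_primeCounting : Tendsto (fun m : ℕ => log m / π m) atTop (𝓝 0) := by
  have hbound : Tendsto (fun m : ℕ => 4 * (log m ^ 2 / m)) atTop (𝓝 0) := by
    simpa [Function.comp_def] using
      ((tendsto_pow_log_div_mul_add_atTop 1 0 2 one_ne_zero).const_mul 4).comp
        tendsto_natCast_atTop_atTop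
  refine squeeze_zero' (Eventually.of_forall fun m => by positivity) ?_ hbound
  filter_upwards [eventually_le_four_mul_primeCounting_mul_log, eventually_ge_atTop 2]
    with m hm hm2
  have hπ : (0 : ℝ) < π m := by
    exact_mod_cast Nat.pos_of_ne_zero (by rw [Ne, Nat.primeCounting_eq_zero_iff]; omega)
  rw [div_le_iff₀ hπ]
  calc log m = log m * 1 := (mul_one _).symm
    _ ≤ log m * (4 * π m * log m / m) := by
        gcongr
        rw [le_div_iff₀ (by positivity)]
        linarith
    _ = 4 * (log m ^ 2 / m) * π m := by ring

lemma tendsto_log_p_div : Tendsto (fun n : ℕ => log (p n) / n) atTop (𝓝 0) :=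
  (tendsto_log_div_primeCounting.comp tendsto_p_atTop).congr' <| by
    filter_upwards [eventually_ge_atTop 1] with n hn
    simp [primeCounting_p hn]

lemma tendsto_p_rpow_one_div :
    Tendsto (fun n : ℕ => (p n : ℝ) ^ ((1 : ℝ) / n)) atTop (𝓝 1) := by
  simpa [rpow_def_of_pos (natCast_p_pos _), ← div_eq_mul_inv, Function.comp_def] using
    (continuous_exp.tendsto 0).comp tendsto_log_p_div

section SumBounds

variable {y : ℝ} (hy : 0 ≤ y) (n : ℕ)
include hy

lemma natCast_le_sum_p_rpow : (n : ℝ) ≤ ∑ r ∈ Finset.Icc 1 n, (p r : ℝ) ^ y := by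
  simpa using Finset.card_nsmul_le_sum (Finset.Icc 1 n) (fun r => (p r : ℝ) ^ y) 1
    fun r _ => one_le_rpow (by exact_mod_cast (p_prime r).one_le) hy

lemma sum_p_rpow_le : ∑ r ∈ Finset.Icc 1 n, (p r : ℝ) ^ y ≤ n * (p n : ℝ) ^ y := by
  simpa using Finset.sum_le_card_nsmul (Finset.Icc 1 n) (fun r => (p r : ℝ) ^ y) _
    fun r hr => rpow_le_rpow (natCast_p_pos r).le
      (by exact_mod_cast p_monotone (Finset.mem_Icc.mp hr).2) hy

end SumBounds

lemma tendsto_sum_p_rpow_div :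
    Tendsto (fun n : ℕ => (∑ r ∈ Finset.Icc 1 n, (p r : ℝ) ^ ((1 : ℝ) / n)) /
      (n * (p n : ℝ) ^ ((1 : ℝ) / n))) atTop (𝓝 1) := by
  have hinv : Tendsto (fun n : ℕ => ((p n : ℝ) ^ ((1 : ℝ) / n))⁻¹) atTop (𝓝 1) := by
    simpa only [inv_one] using tendsto_p_rpow_one_div.inv₀ one_ne_zero
  refine tendsto_of_tendsto_of_tendsto_of_le_of_le' hinv tendsto_const_nhds ?_ ?_
  all_goals
    filter_upwards [eventually_ge_atTop 1] with n hn
    have hq : 0 < (p n : ℝ) ^ ((1 : ℝ) / n) := rpow_pos_of_pos (natCast_p_pos n) _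
  · calc ((p n : ℝ) ^ ((1 : ℝ) / n))⁻¹ = n / (n * (p n : ℝ) ^ ((1 : ℝ) / n)) := by
          field_simp
      _ ≤ _ := by gcongr; exact natCast_le_sum_p_rpow (by positivity) n
  · rw [div_le_one (by positivity)]
    exact sum_p_rpow_le (by positivity) n

theorem stmt_19 :
    ∀ ε : ℝ, 0 < ε → ∃ N : ℕ, ∀ n > N,
      (1 - ε) * n * (p n : ℝ) ^ ((1 : ℝ) / n) * ((n : ℝ) / (n + 1)) <
          ∑ r ∈ Finset.Icc 1 n, (p r : ℝ) ^ ((1 : ℝ) / n) ∧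
        ∑ r ∈ Finset.Icc 1 n, (p r : ℝ) ^ ((1 : ℝ) / n) <
          (1 + ε) * n * (p n : ℝ) ^ ((1 : ℝ) / n) * ((n : ℝ) / (n + 1)) := by
  intro ε hε
  have hratio : Tendsto (fun n : ℕ => (∑ r ∈ Finset.Icc 1 n, (p r : ℝ) ^ ((1 : ℝ) / n)) /
      (n * (p n : ℝ) ^ ((1 : ℝ) / n)) / (n / (n + 1))) atTop (𝓝 1) := by
    have := tendsto_sum_p_rpow_div.div (tendsto_natCast_div_add_atTop (1 : ℝ)) one_ne_zero
    rwa [div_one] at this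
  obtain ⟨N, hN⟩ := eventually_atTop.mp <|
    (hratio.eventually (Ioo_mem_nhds (by linarith : 1 - ε < 1) (by linarith : 1 < 1 + ε))).and
      (eventually_ge_atTop 1)
  refine ⟨N, fun n hn => ?_⟩
  obtain ⟨⟨hlo, hhi⟩, hn1⟩ := hN n hn.le
  have hD : 0 < (n : ℝ) * (p n : ℝ) ^ ((1 : ℝ) / n) * ((n : ℝ) / (n + 1)) := by
    have : (1 : ℝ) ≤ n := by exact_mod_cast hn1
    have := rpow_pos_of_pos (natCast_p_pos n) ((1 : ℝ) / n)
    positivity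
  rw [div_div, lt_div_iff₀ hD] at hlo
  rw [div_div, div_lt_iff₀ hD] at hhi
  constructor <;> linarith
end
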